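/- arXiv:2507.08692 — 3 statements merged into one kernel-verified Lean document; each statement's English description precedes it below -/
import Mathlib

section
/- The intrinsic second derivative of a C²-function f at θ ∈ S^{n−1}, defined as the Hilbert–Schmidt-norm-minimal symmetric matrix B satisfying the second-order Taylor expansion of f along the sphere at θ, is given by f_S''(θ) = P_{θ^⊥}(f''(θ) − ⟨θ, ∇f(θ)⟩ I_n)P_{θ^⊥}, where P_{θ^⊥} is the orthogonal projection onto θ^⊥. In particular, |f_S''(θ)|_HS ≤ |f''(θ) − ⟨θ,∇f(θ)⟩I_n|_HS. -/
/-! On the sphere `‖θ'‖ = ‖θ‖ = 1` the increment `v = θ' - θ` satisfies `⟪θ, v⟫ = -‖v‖² / 2`.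
Feeding this into the Euclidean Taylor expansion turns the first-order term `⟪∇f, v⟫` into
`⟪∇_S f, v⟫ - ⟪θ, ∇f⟫ ‖v‖² / 2`, so `B = f'' - ⟪θ, ∇f⟫ I` satisfies the spherical expansion, and
so does `P B P` because `P v = v + (‖v‖² / 2) θ` differs from `v` only to second order.
Conversely, if two symmetric matrices both satisfy the expansion, their quadratic forms agree up
to `o(‖v‖²)` along the sphere; running along great circles through `θ` shows that they agree on
`θ^⊥`, hence `P C P = P B P`. Finally `P` is an orthogonal projection, so multiplying by it on
either side does not increase the Hilbert–Schmidt norm. -/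

open scoped RealInnerProductSpace
open Asymptotics

noncomputable def frobNorm {n : ℕ} (M : Matrix (Fin n) (Fin n) ℝ) : ℝ :=
  Real.sqrt (∑ i, ∑ j, (M i j) ^ 2)

open Filter Topology Matrix

theorem ContDiffAt.isLittleO_taylor_two {E F : Type*} [NormedAddCommGroup E] [NormedSpace ℝ E]
    [NormedAddCommGroup F] [NormedSpace ℝ F] {f : E → F} {a : E} (hf : ContDiffAt ℝ 2 f a) :
    (fun x => f x - f a - fderiv ℝ f a (x - a) -
        (1 / 2 : ℝ) • iteratedFDeriv ℝ 2 f a ![x - a, x - a]) =o[𝓝 a] fun x => ‖x - a‖ ^ 2 := by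
  obtain ⟨r, hr, hdiff⟩ : ∃ r > 0, ∀ y ∈ Metric.ball a r, DifferentiableAt ℝ f y :=
    Metric.eventually_nhds_iff_ball.1 <|
      (hf.eventually (by simp)).mono fun y hy => hy.differentiableAt (by simp)
  set Q := fderiv ℝ (fderiv ℝ f) a
  have hQ : HasFDerivAt (fderiv ℝ f) Q a :=
    ((hf.fderiv_right (m := 1) le_rfl).differentiableAt one_ne_zero).hasFDerivAt
  have hsymm : IsSymmSndFDerivAt ℝ f a := hf.isSymmSndFDerivAt (by simp)
  -- the derivative of the remainder is `o(‖y - a‖)`; the mean value inequality integrates this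
  have hderiv : ∀ y ∈ Metric.ball a r, HasFDerivWithinAt
      (fun x => f x - fderiv ℝ f a (x - a) - (1 / 2 : ℝ) • Q (x - a) (x - a))
      (fderiv ℝ f y - fderiv ℝ f a - Q (y - a)) (Metric.ball a r) y := by
    intro y hy
    have hsub : HasFDerivAt (fun x => x - a) (ContinuousLinearMap.id ℝ E) y :=
      (hasFDerivAt_id y).sub_const a
    have hquad := ((Q.hasFDerivAt.comp y hsub).clm_apply hsub).const_smul (1 / 2 : ℝ)
    refine ((((hdiff y hy).hasFDerivAt.sub ((fderiv ℝ f a).hasFDerivAt.comp y hsub)).sub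
      hquad).congr_fderiv ?_).hasFDerivWithinAt
    ext v
    have := hsymm v (y - a)
    simp only [Q] at this ⊢
    simp only [ContinuousLinearMap.comp_id, Function.comp_apply, smul_add, _root_.sub_apply,
      _root_.add_apply, _root_.smul_apply, ContinuousLinearMap.flip_apply, this, sub_right_inj]
    module
  have hsmall : (fun y => fderiv ℝ f y - fderiv ℝ f a - Q (y - a))
      =o[𝓝[Metric.ball a r] a] fun y => ‖y - a‖ ^ 1 := by
    simpa using hQ.isLittleO.norm_right.mono nhdsWithin_le_nhds
  have h := (convex_ball a r).isLittleO_pow_succ (Metric.mem_ball_self hr) hderiv hsmall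
  rw [nhdsWithin_eq_nhds.2 (Metric.ball_mem_nhds a hr)] at h
  refine h.congr (fun x => ?_) (fun x => rfl)
  simp [iteratedFDeriv_two_apply, Q]
  abel

section Sphere
variable {E : Type*} [NormedAddCommGroup E] [InnerProductSpace ℝ E] {q : E → ℝ} {θ u : E}

theorem inner_sub_eq_neg_half_norm_sub_sq {x : E} (h : ‖x‖ = ‖θ‖) :
    ⟪θ, x - θ⟫ = -(‖x - θ‖ ^ 2 / 2) := by
  rw [norm_sub_sq_real, inner_sub_right, real_inner_self_eq_norm_sq, h, real_inner_comm]
  ring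

theorem eq_zero_of_isLittleO_sphere_of_norm_eq_one
    (hq_smul : ∀ (c : ℝ) v, q (c • v) = c ^ 2 * q v) (hq : Continuous q) (hθ : ‖θ‖ = 1)
    (ho : (fun x => q (x - θ)) =o[𝓝[Metric.sphere 0 1] θ] fun x => ‖x - θ‖ ^ 2)
    (hu : ‖u‖ = 1) (hθu : ⟪θ, u⟫ = 0) : q u = 0 := by
  -- `γ` is the rational parametrisation of the great circle through `θ` and `u`; since
  -- `γ t - θ = c t • w t`, the ratio `q (γ t - θ) / ‖γ t - θ‖ ^ 2` equals `q (w t) / (1 + t ^ 2)`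
  set c : ℝ → ℝ := fun t => 2 * t / (1 + t ^ 2)
  set w : ℝ → E := fun t => u - t • θ
  set γ : ℝ → E := fun t => θ + c t • w t
  have hpos : ∀ t : ℝ, 0 < 1 + t ^ 2 := fun t => by positivity
  have hw : ∀ t, ‖w t‖ ^ 2 = 1 + t ^ 2 := fun t => by
    simp [w, norm_sub_sq_real, inner_smul_right, real_inner_comm θ u ▸ hθu, norm_smul, hu, hθ]
  have hγ : ∀ t, γ t ∈ Metric.sphere (0 : E) 1 := fun t => by
    have h : ‖γ t‖ ^ 2 = 1 := by
      have hθw : ⟪θ, w t⟫ = -t := by simp [w, inner_sub_right, inner_smul_right, hθu, hθ]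
      rw [norm_add_sq_real, inner_smul_right, hθw, norm_smul, mul_pow, hw, hθ, Real.norm_eq_abs,
        sq_abs]
      simp only [c]
      field_simp
      ring
    simpa using (pow_eq_one_iff_of_nonneg (norm_nonneg _) two_ne_zero).1 h
  have hγ_tendsto : Tendsto γ (𝓝[≠] 0) (𝓝[Metric.sphere 0 1] θ) := by
    refine tendsto_nhdsWithin_iff.2 ⟨?_, Eventually.of_forall hγ⟩
    have hcont : Continuous γ := by
      fun_prop (disch := exact fun t => (hpos t).ne')
    simpa [γ, c] using (hcont.tendsto 0).mono_left nhdsWithin_le_nhds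
  have hratio := (ho.comp_tendsto hγ_tendsto).tendsto_div_nhds_zero
  have hlim : Tendsto (fun t : ℝ => q (w t) / (1 + t ^ 2)) (𝓝[≠] 0) (𝓝 (q u / (1 + 0 ^ 2))) := by
    have hcont : Continuous fun t : ℝ => q (w t) / (1 + t ^ 2) := by
      fun_prop (disch := exact fun t => (hpos t).ne')
    simpa [w] using (hcont.tendsto 0).mono_left nhdsWithin_le_nhds
  have heq : (fun t => q (γ t - θ) / ‖γ t - θ‖ ^ 2) =ᶠ[𝓝[≠] 0]
      fun t => q (w t) / (1 + t ^ 2) := by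
    filter_upwards [self_mem_nhdsWithin] with t (ht : t ≠ 0)
    have hc : c t ≠ 0 := div_ne_zero (mul_ne_zero two_ne_zero ht) (hpos t).ne'
    rw [show γ t - θ = c t • w t by simp [γ], hq_smul, norm_smul, mul_pow, hw, Real.norm_eq_abs,
      sq_abs, mul_div_mul_left _ _ (pow_ne_zero 2 hc)]
  simpa using (tendsto_nhds_unique (hratio.congr' heq) hlim).symm

theorem eq_zero_of_isLittleO_sphere (hq_smul : ∀ (c : ℝ) v, q (c • v) = c ^ 2 * q v)
    (hq : Continuous q) (hθ : ‖θ‖ = 1)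
    (ho : (fun x => q (x - θ)) =o[𝓝[Metric.sphere 0 1] θ] fun x => ‖x - θ‖ ^ 2)
    (hθu : ⟪θ, u⟫ = 0) : q u = 0 := by
  rcases eq_or_ne u 0 with rfl | hu
  · simpa using hq_smul 0 0
  have h := eq_zero_of_isLittleO_sphere_of_norm_eq_one hq_smul hq hθ ho (u := ‖u‖⁻¹ • u)
    (norm_smul_inv_norm hu) (by rw [inner_smul_right, hθu, mul_zero])
  simpa [hq_smul, hu] using h

end Sphere

namespace Matrix

section Polarization
variable {ι κ R : Type*} [Fintype ι] [Fintype κ] [CommRing R]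

theorem transpose_mul_mul_mulVec_dotProduct (A : Matrix κ ι R) (D : Matrix κ κ R) (x : ι → R) :
    (Aᵀ * D * A) *ᵥ x ⬝ᵥ x = D *ᵥ (A *ᵥ x) ⬝ᵥ A *ᵥ x := by
  rw [← mulVec_mulVec, ← mulVec_mulVec, mulVec_transpose, ← dotProduct_mulVec]

variable [DecidableEq ι] [NoZeroDivisors R] [CharZero R]

theorem IsSymm.eq_zero_of_mulVec_dotProduct_self {A : Matrix ι ι R} (hA : A.IsSymm)
    (h : ∀ x, A *ᵥ x ⬝ᵥ x = 0) : A = 0 := by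
  ext i j
  have hi := h (Pi.single i 1)
  have hj := h (Pi.single j 1)
  have hij := h (Pi.single i 1 + Pi.single j 1)
  simp only [mulVec_single, MulOpposite.op_one, one_smul, dotProduct_single, col_apply, mul_one,
    mulVec_add, dotProduct_add, Pi.add_apply] at hi hj hij
  have h2 : (2 : R) * A i j = 0 := by linear_combination hij - hi - hj - hA.apply i j
  exact (mul_eq_zero.1 h2).resolve_left two_ne_zero

theorem transpose_mul_mul_eq_zero {A : Matrix κ ι R} {D : Matrix κ κ R} (hD : D.IsSymm)
    (h : ∀ x, D *ᵥ (A *ᵥ x) ⬝ᵥ A *ᵥ x = 0) : Aᵀ * D * A = 0 :=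
  IsSymm.eq_zero_of_mulVec_dotProduct_self
    (by simp [IsSymm, transpose_mul, hD.eq, Matrix.mul_assoc])
    fun x => by rw [transpose_mul_mul_mulVec_dotProduct, h]

end Polarization

section OrthProj
variable {ι R : Type*} [DecidableEq ι] [CommRing R] {θ : ι → R}

def orthProj (θ : ι → R) : Matrix ι ι R := 1 - vecMulVec θ θ

theorem isSymm_orthProj : (orthProj θ).IsSymm := by
  simp [orthProj, IsSymm, transpose_sub, transpose_vecMulVec]

variable [Fintype ι]

theorem orthProj_mulVec (x : ι → R) : orthProj θ *ᵥ x = x - (θ ⬝ᵥ x) • θ := by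
  rw [orthProj, sub_mulVec, one_mulVec, vecMulVec_mulVec, op_smul_eq_smul]

theorem dotProduct_orthProj_mulVec (hθ : θ ⬝ᵥ θ = 1) (x : ι → R) :
    θ ⬝ᵥ orthProj θ *ᵥ x = 0 := by
  simp [orthProj_mulVec, dotProduct_sub, hθ]

theorem orthProj_mul_self (hθ : θ ⬝ᵥ θ = 1) : orthProj θ * orthProj θ = orthProj θ := by
  simp only [ext_iff_mulVec, ← mulVec_mulVec]
  intro x
  rw [orthProj_mulVec (orthProj θ *ᵥ x), dotProduct_orthProj_mulVec hθ, zero_smul, sub_zero]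

theorem orthProj_mulVec_dotProduct_self (hθ : θ ⬝ᵥ θ = 1) (x : ι → R) :
    orthProj θ *ᵥ x ⬝ᵥ orthProj θ *ᵥ x = x ⬝ᵥ x - (θ ⬝ᵥ x) ^ 2 := by
  simp only [orthProj_mulVec, sub_dotProduct, dotProduct_sub, smul_dotProduct, dotProduct_smul,
    smul_eq_mul, hθ, dotProduct_comm x θ]
  ring

end OrthProj

end Matrix

section FrobNorm
variable {n : ℕ} {θ : Fin n → ℝ}

theorem frobNorm_transpose (A : Matrix (Fin n) (Fin n) ℝ) : frobNorm Aᵀ = frobNorm A := by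
  rw [frobNorm, Finset.sum_comm]
  rfl

theorem frobNorm_orthProj_mul_le (hθ : θ ⬝ᵥ θ = 1) (A : Matrix (Fin n) (Fin n) ℝ) :
    frobNorm (orthProj θ * A) ≤ frobNorm A := by
  rw [← frobNorm_transpose, ← frobNorm_transpose A]
  refine Real.sqrt_le_sqrt (Finset.sum_le_sum fun j _ => ?_)
  have h := orthProj_mulVec_dotProduct_self hθ (Aᵀ j)
  simp only [dotProduct, ← sq] at h
  exact h.le.trans (sub_le_self _ (sq_nonneg _))

theorem frobNorm_orthProj_mul_mul_orthProj_le (hθ : θ ⬝ᵥ θ = 1) (A : Matrix (Fin n) (Fin n) ℝ) :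
    frobNorm (orthProj θ * A * orthProj θ) ≤ frobNorm A :=
  calc frobNorm (orthProj θ * A * orthProj θ)
      = frobNorm (orthProj θ * (orthProj θ * A)ᵀ) := by
        rw [← frobNorm_transpose, transpose_mul, isSymm_orthProj.eq]
    _ ≤ frobNorm (orthProj θ * A) := by
        rw [← frobNorm_transpose (orthProj θ * A)]
        exact frobNorm_orthProj_mul_le hθ _
    _ ≤ frobNorm A := frobNorm_orthProj_mul_le hθ A

end FrobNorm

section Euclidean
variable {ι : Type*} [Fintype ι]

theorem EuclideanSpace.real_inner_eq_dotProduct (x y : EuclideanSpace ℝ ι) :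
    ⟪x, y⟫ = x.ofLp ⬝ᵥ y.ofLp := by
  simp [EuclideanSpace.inner_eq_star_dotProduct, dotProduct_comm]

theorem EuclideanSpace.ofLp_dotProduct_self (x : EuclideanSpace ℝ ι) :
    x.ofLp ⬝ᵥ x.ofLp = ‖x‖ ^ 2 := by
  rw [← real_inner_eq_dotProduct, real_inner_self_eq_norm_sq]

-- `gradient f θ - ⟪gradient f θ, θ⟫ • θ` is the spherical gradient `∇_S f(θ)`
noncomputable def sphericalTaylorRemainder (f : EuclideanSpace ℝ ι → ℝ) (θ : EuclideanSpace ℝ ι)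
    (C : Matrix ι ι ℝ) (x : EuclideanSpace ℝ ι) : ℝ :=
  f x - f θ - ⟪gradient f θ - ⟪gradient f θ, θ⟫ • θ, x - θ⟫ -
    1 / 2 * (C *ᵥ (x - θ).ofLp ⬝ᵥ (x - θ).ofLp)

theorem sphericalTaylorRemainder_sub_sphericalTaylorRemainder (f : EuclideanSpace ℝ ι → ℝ)
    (θ : EuclideanSpace ℝ ι) (C C' : Matrix ι ι ℝ) (x : EuclideanSpace ℝ ι) :
    sphericalTaylorRemainder f θ C x - sphericalTaylorRemainder f θ C' x =
      1 / 2 * ((C' - C) *ᵥ (x - θ).ofLp ⬝ᵥ (x - θ).ofLp) := by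
  simp only [sphericalTaylorRemainder, sub_mulVec, sub_dotProduct]
  ring

variable [DecidableEq ι]

noncomputable def hessianMatrix (f : EuclideanSpace ℝ ι → ℝ) (x : EuclideanSpace ℝ ι) :
    Matrix ι ι ℝ :=
  Matrix.of fun i k =>
    iteratedFDeriv ℝ 2 f x ![EuclideanSpace.single i 1, EuclideanSpace.single k 1]

theorem iteratedFDeriv_two_eq_dotProduct_hessianMatrix_mulVec (f : EuclideanSpace ℝ ι → ℝ)
    (x v w : EuclideanSpace ℝ ι) :
    iteratedFDeriv ℝ 2 f x ![v, w] = v.ofLp ⬝ᵥ hessianMatrix f x *ᵥ w.ofLp := by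
  conv_lhs => rw [← (EuclideanSpace.basisFun ι ℝ).sum_repr v,
    ← (EuclideanSpace.basisFun ι ℝ).sum_repr w]
  simp only [EuclideanSpace.basisFun_repr, EuclideanSpace.basisFun_apply, iteratedFDeriv_two_apply,
    cons_val_zero, map_sum, map_smul, cons_val_one, _root_.sum_apply, _root_.smul_apply,
    smul_eq_mul, Finset.mul_sum, dotProduct, mulVec, hessianMatrix, of_apply]
  rw [Finset.sum_comm]
  exact Finset.sum_congr rfl fun i _ => Finset.sum_congr rfl fun k _ => by ring

theorem isSymm_hessianMatrix {f : EuclideanSpace ℝ ι → ℝ} {x : EuclideanSpace ℝ ι}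
    (hf : ContDiffAt ℝ 2 f x) : (hessianMatrix f x).IsSymm :=
  IsSymm.ext fun i k => by
    simp [hessianMatrix, iteratedFDeriv_two_apply,
      hf.isSymmSndFDerivAt (by simp) (EuclideanSpace.single i 1)]

variable {f : EuclideanSpace ℝ ι → ℝ} {θ : EuclideanSpace ℝ ι}

theorem ContDiffAt.isLittleO_sphericalTaylorRemainder (hf : ContDiffAt ℝ 2 f θ) (hθ : ‖θ‖ = 1) :
    sphericalTaylorRemainder f θ (hessianMatrix f θ - diagonal fun _ => ⟪θ, gradient f θ⟫)
      =o[𝓝[Metric.sphere 0 1] θ] fun x => ‖x - θ‖ ^ 2 := by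
  refine (hf.isLittleO_taylor_two.mono nhdsWithin_le_nhds).congr' ?_ EventuallyEq.rfl
  filter_upwards [self_mem_nhdsWithin] with x hx
  have hsph := inner_sub_eq_neg_half_norm_sub_sq (x := x) (θ := θ) (by simpa [hθ] using hx)
  have hdiag : ∀ (c : ℝ) (v : ι → ℝ), (diagonal fun _ => c) *ᵥ v = c • v := fun c v => by
    ext; simp [mulVec_diagonal]
  rw [sphericalTaylorRemainder, ← inner_gradient_left,
    iteratedFDeriv_two_eq_dotProduct_hessianMatrix_mulVec, sub_mulVec, sub_dotProduct, hdiag,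
    smul_dotProduct, EuclideanSpace.ofLp_dotProduct_self, inner_sub_left, inner_smul_left, hsph,
    dotProduct_comm (x - θ).ofLp,
    real_inner_comm θ]
  simp only [conj_trivial, smul_eq_mul]
  ring

theorem Asymptotics.IsLittleO.sphericalTaylorRemainder_orthProj (hθ : ‖θ‖ = 1) {B : Matrix ι ι ℝ}
    (hB : sphericalTaylorRemainder f θ B =o[𝓝[Metric.sphere 0 1] θ] fun x => ‖x - θ‖ ^ 2) :
    sphericalTaylorRemainder f θ (orthProj θ.ofLp * B * orthProj θ.ofLp)
      =o[𝓝[Metric.sphere 0 1] θ] fun x => ‖x - θ‖ ^ 2 := by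
  set e : EuclideanSpace ℝ ι → ℝ := fun x =>
    (B *ᵥ (x - θ).ofLp ⬝ᵥ θ.ofLp + B *ᵥ θ.ofLp ⬝ᵥ (x - θ).ofLp) / 2 +
      ‖x - θ‖ ^ 2 / 4 * (B *ᵥ θ.ofLp ⬝ᵥ θ.ofLp)
  have he : Tendsto e (𝓝[Metric.sphere 0 1] θ) (𝓝 0) := by
    have : Continuous e := by fun_prop
    simpa [e] using (this.tendsto θ).mono_left nhdsWithin_le_nhds
  have hdiff : (fun x => ‖x - θ‖ ^ 2 * e x) =o[𝓝[Metric.sphere 0 1] θ] fun x => ‖x - θ‖ ^ 2 := by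
    simpa using (isBigO_refl (fun x => ‖x - θ‖ ^ 2) _).mul_isLittleO ((isLittleO_one_iff ℝ).2 he)
  refine (hB.sub (hdiff.const_mul_left (1 / 2))).congr' ?_ EventuallyEq.rfl
  filter_upwards [self_mem_nhdsWithin] with x hx
  have hsph : θ.ofLp ⬝ᵥ (x - θ).ofLp = -(‖x - θ‖ ^ 2 / 2) := by
    rw [← EuclideanSpace.real_inner_eq_dotProduct]
    exact inner_sub_eq_neg_half_norm_sub_sq (by simpa [hθ] using hx)
  rw [sub_eq_iff_eq_add', ← sub_eq_iff_eq_add,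
    sphericalTaylorRemainder_sub_sphericalTaylorRemainder]
  nth_rewrite 1 [← (isSymm_orthProj (θ := θ.ofLp)).eq]
  -- on the sphere, `P v = v + (‖v‖² / 2) • θ`
  rw [sub_mulVec, sub_dotProduct, transpose_mul_mul_mulVec_dotProduct, orthProj_mulVec, hsph]
  simp only [e, neg_smul, sub_neg_eq_add, mulVec_add, mulVec_smul, add_dotProduct, dotProduct_add,
    smul_dotProduct, dotProduct_smul, smul_eq_mul]
  ring

theorem orthProj_mul_mul_orthProj_eq_zero_of_isLittleO_sphere (hθ : ‖θ‖ = 1)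
    {D : Matrix ι ι ℝ} (hD : D.IsSymm)
    (ho : (fun x => D *ᵥ (x - θ).ofLp ⬝ᵥ (x - θ).ofLp) =o[𝓝[Metric.sphere 0 1] θ]
      fun x => ‖x - θ‖ ^ 2) :
    orthProj θ.ofLp * D * orthProj θ.ofLp = 0 := by
  have hθθ : θ.ofLp ⬝ᵥ θ.ofLp = 1 := by simp [EuclideanSpace.ofLp_dotProduct_self, hθ]
  nth_rewrite 1 [← (isSymm_orthProj (θ := θ.ofLp)).eq]
  refine transpose_mul_mul_eq_zero hD fun x => ?_
  refine eq_zero_of_isLittleO_sphere (q := fun y : EuclideanSpace ℝ ι => D *ᵥ y.ofLp ⬝ᵥ y.ofLp)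
    (fun c v => ?_) (by fun_prop) hθ ho (u := WithLp.toLp 2 (orthProj θ.ofLp *ᵥ x)) ?_
  · simp only [WithLp.ofLp_smul, mulVec_smul, smul_dotProduct, dotProduct_smul, smul_eq_mul]
    ring
  · rw [EuclideanSpace.real_inner_eq_dotProduct]
    exact dotProduct_orthProj_mulVec hθθ x

theorem orthProj_mul_mul_orthProj_eq_of_isLittleO (hθ : ‖θ‖ = 1)
    {C C' : Matrix ι ι ℝ} (hC : C.IsSymm) (hC' : C'.IsSymm)
    (ho : sphericalTaylorRemainder f θ C =o[𝓝[Metric.sphere 0 1] θ] fun x => ‖x - θ‖ ^ 2)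
    (ho' : sphericalTaylorRemainder f θ C' =o[𝓝[Metric.sphere 0 1] θ] fun x => ‖x - θ‖ ^ 2) :
    orthProj θ.ofLp * C * orthProj θ.ofLp = orthProj θ.ofLp * C' * orthProj θ.ofLp := by
  have h := orthProj_mul_mul_orthProj_eq_zero_of_isLittleO_sphere hθ (hC.sub hC')
    (((ho'.sub ho).const_mul_left 2).congr_left fun x => by
      rw [sphericalTaylorRemainder_sub_sphericalTaylorRemainder]
      ring)
  rwa [mul_sub, sub_mul, sub_eq_zero] at h

end Euclidean

/-- The intrinsic second derivative of `f` on the sphere at `θ` is the orthogonal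
projection `P B P` of `B = f''(θ) - ⟨θ, ∇f(θ)⟩ I`, i.e. it satisfies the spherical
second order Taylor expansion, it has minimal Hilbert–Schmidt norm among all symmetric
matrices satisfying this expansion, and its norm is bounded by that of `B`. -/
theorem stmt_11 (n : ℕ) (f : EuclideanSpace ℝ (Fin n) → ℝ) (hf : ContDiff ℝ 2 f)
    (θ : EuclideanSpace ℝ (Fin n)) (hθ : ‖θ‖ = 1)
    (H : Matrix (Fin n) (Fin n) ℝ)
    (hH : ∀ i k, H i k =
      iteratedFDeriv ℝ 2 f θ ![EuclideanSpace.single i 1, EuclideanSpace.single k 1])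
    (g : EuclideanSpace ℝ (Fin n)) (hg : g = gradient f θ)
    (P : Matrix (Fin n) (Fin n) ℝ)
    (hP : ∀ i k, P i k = (if i = k then (1 : ℝ) else 0) - θ i * θ k)
    (B M : Matrix (Fin n) (Fin n) ℝ)
    (hB : B = H - Matrix.diagonal (fun _ => ⟪θ, g⟫))
    (hM : M = P * B * P)
    (S : Set (Matrix (Fin n) (Fin n) ℝ))
    (hS : S = {C | C.IsSymm ∧
      (fun θ' : EuclideanSpace ℝ (Fin n) =>
          f θ' - f θ - (∑ i, (g i - ⟪g, θ⟫ * θ i) * (θ' i - θ i)) -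
            (1 / 2) * ∑ i, (∑ k, C i k * (θ' k - θ k)) * (θ' i - θ i))
        =o[nhdsWithin θ (Metric.sphere (0 : EuclideanSpace ℝ (Fin n)) 1)]
          (fun θ' => ‖θ' - θ‖ ^ 2)}) :
    M ∈ S ∧ (∀ C ∈ S, frobNorm M ≤ frobNorm C) ∧ frobNorm M ≤ frobNorm B := by
  obtain rfl : H = hessianMatrix f θ := by ext i k; simp [hH, hessianMatrix]
  obtain rfl : P = orthProj θ.ofLp := by ext i k; simp [hP, orthProj, one_apply, vecMulVec_apply]
  obtain rfl : S = {C | C.IsSymm ∧ sphericalTaylorRemainder f θ C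
      =o[𝓝[Metric.sphere 0 1] θ] fun x => ‖x - θ‖ ^ 2} := by
    subst hS hg
    ext C
    unfold sphericalTaylorRemainder
    simp [EuclideanSpace.real_inner_eq_dotProduct, dotProduct, mulVec]
  subst hg hB hM
  have hθθ : θ.ofLp ⬝ᵥ θ.ofLp = 1 := by simp [EuclideanSpace.ofLp_dotProduct_self, hθ]
  set P := orthProj θ.ofLp
  set B := hessianMatrix f θ - diagonal fun _ => ⟪θ, gradient f θ⟫
  have hBsymm : B.IsSymm := (isSymm_hessianMatrix hf.contDiffAt).sub (isSymm_diagonal _)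
  have hMsymm : (P * B * P).IsSymm := by
    simp [IsSymm, transpose_mul, isSymm_orthProj.eq, hBsymm.eq, Matrix.mul_assoc, P]
  have hM :=
    (hf.contDiffAt.isLittleO_sphericalTaylorRemainder hθ).sphericalTaylorRemainder_orthProj hθ
  refine ⟨⟨hMsymm, hM⟩, fun C ⟨hCsymm, hC⟩ => ?_, frobNorm_orthProj_mul_mul_orthProj_le hθθ B⟩
  have hPMP : P * (P * B * P) * P = P * B * P := by
    calc P * (P * B * P) * P = (P * P) * B * (P * P) := by noncomm_ring
      _ = P * B * P := by rw [orthProj_mul_self hθθ]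
  calc frobNorm (P * B * P) = frobNorm (P * C * P) := by
        rw [orthProj_mul_mul_orthProj_eq_of_isLittleO hθ hCsymm hMsymm hC hM,
          hPMP]
    _ ≤ frobNorm C := frobNorm_orthProj_mul_mul_orthProj_le hθθ C
end

section
/- Let p ≥ 2 and q = p/(p−1). Let f : ℝⁿ → ℝ be C^j-smooth. Then for every x ∈ ℝⁿ, the ℓ_q-norm of the generalized gradient of x ↦ |f^{(j−1)}(x)|_{op(q)} is at most |f^{(j)}(x)|_{op(q)}, where |T|_{op(q)} = sup{T[v₁,…,v_k] : |v_i|_p ≤ 1}. -/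
/-!
Since the `ℓ_p` unit ball lies in the sup-norm unit ball, `opq p` is `1`-Lipschitz for the
operator norm, hence `y ↦ |f^{(j)}(y)|_{op(q)}` is continuous. For `v` in the `ℓ_p` ball, the
derivative of `t ↦ f^{(j-1)}(x + t h)[v]` is `f^{(j)}(x + t h)[h, v]`, which by homogeneity in the
first slot is at most `|f^{(j)}(x + t h)|_{op(q)} |h|_p`. The mean value theorem along the segment
therefore bounds the difference quotient by `|f^{(j)}(x)|_{op(q)} + ε` for small `h`.
-/

open Set Filter

/-- The `op(q)` operator norm of a `j`-multilinear form on `ℝⁿ`: the supremum of its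
values over vectors in the `ℓ_p` unit ball. -/
noncomputable def opq (p : ℝ) {n j : ℕ}
    (T : ContinuousMultilinearMap ℝ (fun _ : Fin j => (Fin n → ℝ)) ℝ) : ℝ :=
  ⨆ v : {v : Fin j → Fin n → ℝ // ∀ s, (∑ k, |v s k| ^ p) ^ (1 / p) ≤ 1},
    T (fun s => v.1 s)

/-- `ellpNorm p w ≤ 1` unfolds to the constraint in the index type of `opq`. -/
noncomputable def ellpNorm (p : ℝ) {n : ℕ} (w : Fin n → ℝ) : ℝ := (∑ k, |w k| ^ p) ^ (1 / p)

section ellpNorm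

variable {p : ℝ} {n : ℕ}

lemma ellpNorm_nonneg (w : Fin n → ℝ) : 0 ≤ ellpNorm p w := by
  unfold ellpNorm; positivity

lemma abs_le_ellpNorm (hp : 0 < p) (w : Fin n → ℝ) (k : Fin n) : |w k| ≤ ellpNorm p w := by
  calc |w k| = (|w k| ^ p) ^ (1 / p) := by
        rw [← Real.rpow_mul (abs_nonneg _), mul_one_div_cancel hp.ne', Real.rpow_one]
    _ ≤ ellpNorm p w := by
        unfold ellpNorm
        gcongr
        exact Finset.single_le_sum (f := fun i => |w i| ^ p) (fun i _ => by positivity)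
          (Finset.mem_univ k)

lemma norm_le_ellpNorm (hp : 0 < p) (w : Fin n → ℝ) : ‖w‖ ≤ ellpNorm p w :=
  (pi_norm_le_iff_of_nonneg (ellpNorm_nonneg w)).2 fun k => abs_le_ellpNorm hp w k

lemma ellpNorm_zero (hp : 0 < p) : ellpNorm p (0 : Fin n → ℝ) = 0 := by
  simp [ellpNorm, Real.zero_rpow hp.ne', Real.zero_rpow (inv_ne_zero hp.ne')]

lemma ellpNorm_pos (hp : 0 < p) {w : Fin n → ℝ} (hw : w ≠ 0) : 0 < ellpNorm p w :=
  (norm_pos_iff.2 hw).trans_le (norm_le_ellpNorm hp w)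

lemma ellpNorm_smul (hp : 0 < p) {c : ℝ} (hc : 0 ≤ c) (w : Fin n → ℝ) :
    ellpNorm p (c • w) = c * ellpNorm p w := by
  have hterm : ∀ k, |(c • w) k| ^ p = c ^ p * |w k| ^ p := fun k => by
    rw [Pi.smul_apply, smul_eq_mul, abs_mul, abs_of_nonneg hc, Real.mul_rpow hc (abs_nonneg _)]
  rw [ellpNorm, Finset.sum_congr rfl fun k _ => hterm k, ← Finset.mul_sum,
    Real.mul_rpow (by positivity) (by positivity), ← Real.rpow_mul hc,
    mul_one_div_cancel hp.ne', Real.rpow_one, ellpNorm]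

lemma ellpNorm_neg (w : Fin n → ℝ) : ellpNorm p (-w) = ellpNorm p w := by
  simp [ellpNorm]

end ellpNorm

section opq

variable {p : ℝ} {n j : ℕ}

lemma abs_apply_le_opNorm_of_ellpNorm_le_one (hp : 0 < p)
    (T : ContinuousMultilinearMap ℝ (fun _ : Fin j => (Fin n → ℝ)) ℝ)
    {v : Fin j → Fin n → ℝ} (hv : ∀ s, ellpNorm p (v s) ≤ 1) : |T v| ≤ ‖T‖ :=
  calc |T v| ≤ ‖T‖ * ∏ s, ‖v s‖ := T.le_opNorm v
    _ ≤ ‖T‖ * 1 := by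
        gcongr
        exact Finset.prod_le_one (fun s _ => norm_nonneg _)
          fun s _ => (norm_le_ellpNorm hp (v s)).trans (hv s)
    _ = ‖T‖ := mul_one _

lemma le_opq (hp : 0 < p) (T : ContinuousMultilinearMap ℝ (fun _ : Fin j => (Fin n → ℝ)) ℝ)
    {v : Fin j → Fin n → ℝ} (hv : ∀ s, ellpNorm p (v s) ≤ 1) : T v ≤ opq p T := by
  refine le_ciSup (f := fun v : {v : Fin j → Fin n → ℝ // ∀ s, ellpNorm p (v s) ≤ 1} =>
    T (fun s => v.1 s)) ⟨‖T‖, ?_⟩ ⟨v, hv⟩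
  rintro _ ⟨w, rfl⟩
  exact (le_abs_self _).trans (abs_apply_le_opNorm_of_ellpNorm_le_one hp T w.2)

lemma opq_le (hp : 0 < p) (T : ContinuousMultilinearMap ℝ (fun _ : Fin j => (Fin n → ℝ)) ℝ)
    {c : ℝ} (hc : ∀ v : Fin j → Fin n → ℝ, (∀ s, ellpNorm p (v s) ≤ 1) → T v ≤ c) :
    opq p T ≤ c := by
  have : Nonempty {v : Fin j → Fin n → ℝ // ∀ s, ellpNorm p (v s) ≤ 1} :=
    ⟨⟨0, fun s => (ellpNorm_zero hp).le.trans zero_le_one⟩⟩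
  exact ciSup_le (ι := {v : Fin j → Fin n → ℝ // ∀ s, ellpNorm p (v s) ≤ 1}) fun v => hc _ v.2

lemma opq_nonneg {m : ℕ} (hp : 0 < p)
    (T : ContinuousMultilinearMap ℝ (fun _ : Fin (m + 1) => (Fin n → ℝ)) ℝ) :
    0 ≤ opq p T := by
  simpa using le_opq hp T (v := 0) fun s => (ellpNorm_zero hp).le.trans zero_le_one

lemma opq_le_opq_add (hp : 0 < p)
    (A B : ContinuousMultilinearMap ℝ (fun _ : Fin j => (Fin n → ℝ)) ℝ) {c : ℝ}
    (hc : ∀ v : Fin j → Fin n → ℝ, (∀ s, ellpNorm p (v s) ≤ 1) → A v ≤ B v + c) :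
    opq p A ≤ opq p B + c :=
  opq_le hp A fun v hv => (hc v hv).trans (by linarith [le_opq hp B hv])

lemma abs_opq_sub_le (hp : 0 < p)
    (A B : ContinuousMultilinearMap ℝ (fun _ : Fin j => (Fin n → ℝ)) ℝ) {c : ℝ}
    (hc : ∀ v : Fin j → Fin n → ℝ, (∀ s, ellpNorm p (v s) ≤ 1) → |A v - B v| ≤ c) :
    |opq p A - opq p B| ≤ c := by
  rw [abs_sub_le_iff, sub_le_iff_le_add', sub_le_iff_le_add']
  refine ⟨?_, ?_⟩ <;> refine opq_le_opq_add hp _ _ fun v hv => ?_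
  · linarith [(abs_sub_le_iff.1 (hc v hv)).1]
  · linarith [(abs_sub_le_iff.1 (hc v hv)).2]

lemma lipschitzWith_opq (hp : 0 < p) :
    LipschitzWith 1 (opq p : ContinuousMultilinearMap ℝ (fun _ : Fin j => (Fin n → ℝ)) ℝ → ℝ) :=
  LipschitzWith.of_dist_le_mul fun A B => by
    rw [Real.dist_eq, NNReal.coe_one, one_mul, dist_eq_norm]
    refine abs_opq_sub_le hp A B fun v hv => ?_
    rw [← sub_apply]
    exact abs_apply_le_opNorm_of_ellpNorm_le_one hp _ hv

lemma apply_cons_le_opq_mul {m : ℕ} (hp : 0 < p)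
    (T : ContinuousMultilinearMap ℝ (fun _ : Fin (m + 1) => (Fin n → ℝ)) ℝ)
    (h : Fin n → ℝ) {v : Fin m → Fin n → ℝ} (hv : ∀ s, ellpNorm p (v s) ≤ 1) :
    T (Fin.cons h v) ≤ opq p T * ellpNorm p h := by
  rcases eq_or_ne h 0 with rfl | hh
  · rw [T.map_coord_zero 0 (Fin.cons_zero _ _)]
    exact mul_nonneg (opq_nonneg hp T) (ellpNorm_nonneg 0)
  set c := ellpNorm p h
  have hc : 0 < c := ellpNorm_pos hp hh
  have hu : ∀ s, ellpNorm p ((Fin.cons (c⁻¹ • h) v : Fin (m + 1) → Fin n → ℝ) s) ≤ 1 := by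
    refine Fin.cases ?_ (fun i => by simpa using hv i)
    rw [Fin.cons_zero, ellpNorm_smul hp (inv_nonneg.2 hc.le), inv_mul_cancel₀ hc.ne']
  calc T (Fin.cons h v) = c * T (Fin.cons (c⁻¹ • h) v) := by
        rw [T.cons_smul, smul_eq_mul, ← mul_assoc, mul_inv_cancel₀ hc.ne', one_mul]
    _ ≤ c * opq p T := by gcongr; exact le_opq hp T hu
    _ = opq p T * c := mul_comm _ _

lemma abs_apply_cons_le_opq_mul {m : ℕ} (hp : 0 < p)
    (T : ContinuousMultilinearMap ℝ (fun _ : Fin (m + 1) => (Fin n → ℝ)) ℝ)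
    (h : Fin n → ℝ) {v : Fin m → Fin n → ℝ} (hv : ∀ s, ellpNorm p (v s) ≤ 1) :
    |T (Fin.cons h v)| ≤ opq p T * ellpNorm p h := by
  have hneg : T (Fin.cons (-h) v) = -T (Fin.cons h v) := by
    rw [← neg_one_smul ℝ h, T.cons_smul, neg_one_smul]
  refine abs_le.2 ⟨?_, apply_cons_le_opq_mul hp T h hv⟩
  have := apply_cons_le_opq_mul hp T (-h) hv
  rw [hneg, ellpNorm_neg] at this
  linarith

end opq

lemma hasDerivAt_iteratedFDeriv_apply_line {𝕜 E F : Type*} [NontriviallyNormedField 𝕜]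
    [NormedAddCommGroup E] [NormedSpace 𝕜 E] [NormedAddCommGroup F] [NormedSpace 𝕜 F]
    {m : ℕ} {f : E → F} (hf : ContDiff 𝕜 (m + 1) f) (x h : E) (v : Fin m → E) (t : 𝕜) :
    HasDerivAt (fun t : 𝕜 => iteratedFDeriv 𝕜 m f (x + t • h) v)
      (iteratedFDeriv 𝕜 (m + 1) f (x + t • h) (Fin.cons h v)) t := by
  have hline : HasDerivAt (fun t : 𝕜 => x + t • h) h t := by
    simpa using ((hasDerivAt_id t).smul_const h).const_add x
  have hG := (hf.differentiable_iteratedFDeriv (by exact_mod_cast lt_add_one m)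
    (x + t • h)).hasFDerivAt
  exact (ContinuousMultilinearMap.apply 𝕜 _ F v).hasFDerivAt.comp_hasDerivAt t
    (hG.comp_hasDerivAt t hline)

lemma abs_opq_iteratedFDeriv_add_sub_le {p : ℝ} {n m : ℕ} (hp : 0 < p)
    {f : (Fin n → ℝ) → ℝ} (hf : ContDiff ℝ (m + 1) f) (x h : Fin n → ℝ) {C : ℝ}
    (hC : ∀ t ∈ Ico (0 : ℝ) 1, opq p (iteratedFDeriv ℝ (m + 1) f (x + t • h)) ≤ C) :
    |opq p (iteratedFDeriv ℝ m f (x + h)) - opq p (iteratedFDeriv ℝ m f x)| ≤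
      C * ellpNorm p h := by
  refine abs_opq_sub_le hp _ _ fun v hv => ?_
  simpa using norm_image_sub_le_of_norm_deriv_le_segment_01'
    (f := fun t : ℝ => iteratedFDeriv ℝ m f (x + t • h) v)
    (fun t _ => (hasDerivAt_iteratedFDeriv_apply_line hf x h v t).hasDerivWithinAt)
    fun t ht => (abs_apply_cons_le_opq_mul hp _ h hv).trans
      (mul_le_mul_of_nonneg_right (hC t ht) (ellpNorm_nonneg h))

/-- Where `u` is not cobounded (e.g. `l = ⊥`), `limsup u l` is the junk value `0`; hence `0 ≤ a`. -/
lemma Real.limsup_le_of_forall_pos_eventually_le_add {ι : Type*} {l : Filter ι} {u : ι → ℝ}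
    {a : ℝ} (ha : 0 ≤ a) (h : ∀ ε > 0, ∀ᶠ i in l, u i ≤ a + ε) : limsup u l ≤ a := by
  by_cases hu : l.IsCoboundedUnder (· ≤ ·) u
  · exact le_of_forall_pos_le_add fun ε hε => limsup_le_of_le hu (h ε hε)
  · rw [Real.limsup_of_not_isCoboundedUnder hu]
    exact ha

theorem stmt_13_general (p : ℝ) (hp : 2 ≤ p)
    (n j : ℕ) (hj : 1 ≤ j) (f : (Fin n → ℝ) → ℝ) (hf : ContDiff ℝ (↑j : ℕ∞) f)
    (x : Fin n → ℝ) :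
    Filter.limsup
      (fun h : Fin n → ℝ =>
        |opq p (iteratedFDeriv ℝ (j - 1) f (x + h)) -
            opq p (iteratedFDeriv ℝ (j - 1) f x)| /
          (∑ k, |h k| ^ p) ^ (1 / p))
      (nhdsWithin 0 {0}ᶜ) ≤ opq p (iteratedFDeriv ℝ j f x) := by
  replace hp : 0 < p := by linarith
  obtain ⟨m, rfl⟩ : ∃ m, j = m + 1 := ⟨j - 1, by omega⟩
  replace hf : ContDiff ℝ (m + 1) f := by exact_mod_cast hf
  rw [Nat.add_sub_cancel]
  set F := iteratedFDeriv ℝ (m + 1) f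
  have hF : Continuous fun y => opq p (F y) :=
    (lipschitzWith_opq hp).continuous.comp (hf.continuous_iteratedFDeriv le_rfl)
  refine Real.limsup_le_of_forall_pos_eventually_le_add (opq_nonneg hp _) fun ε hε => ?_
  obtain ⟨δ, hδ, hnear⟩ := Metric.continuousAt_iff.1 (hF.continuousAt (x := x)) ε hε
  filter_upwards [self_mem_nhdsWithin, nhdsWithin_le_nhds (Metric.ball_mem_nhds 0 hδ)]
    with h (hh : h ≠ 0) (hhδ : dist h 0 < δ)
  refine (div_le_iff₀ (ellpNorm_pos hp hh)).2 <|
    abs_opq_iteratedFDeriv_add_sub_le hp hf x h fun t ht => ?_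
  have hdist : dist (x + t • h) x < δ :=
    calc dist (x + t • h) x = t * ‖h‖ := by
          rw [dist_eq_norm, add_sub_cancel_left, norm_smul, Real.norm_of_nonneg ht.1]
      _ ≤ ‖h‖ := mul_le_of_le_one_left (norm_nonneg h) ht.2.le
      _ < δ := by rwa [← dist_zero_right]
  linarith [(abs_lt.1 (hnear hdist)).2]

/-- The `ℓ_q` modulus of the gradient (computed with respect to the `ℓ_p` metric) of
`x ↦ |f^{(j-1)}(x)|_{op(q)}` is bounded by `|f^{(j)}(x)|_{op(q)}`. -/
theorem stmt_13 (p : ℝ) (hp : 2 ≤ p) (q : ℝ) (hq : q = p / (p - 1))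
    (n j : ℕ) (hj : 1 ≤ j) (f : (Fin n → ℝ) → ℝ) (hf : ContDiff ℝ (↑j : ℕ∞) f)
    (x : Fin n → ℝ) :
    Filter.limsup
      (fun h : Fin n → ℝ =>
        |opq p (iteratedFDeriv ℝ (j - 1) f (x + h)) -
            opq p (iteratedFDeriv ℝ (j - 1) f x)| /
          (∑ k, |h k| ^ p) ^ (1 / p))
      (nhdsWithin 0 {0}ᶜ) ≤ opq p (iteratedFDeriv ℝ j f x) :=
  stmt_13_general p hp n j hj f hf x
end

section
/- Let X₁,…,Xₙ be independent random variables, X' an independent copy, and f ∈ L^∞. Define the j-th order L^∞ difference tensors 𝔥^{(j)}f with entries 𝔥_{i₁…i_j}f = ‖∏_{s=1}^j(Id − T_{i_s})f‖_{i₁,…,i_j,∞} for distinct indices and 0 otherwise, where T_i replaces X_i by X_i'. Then |𝔥⁺|𝔥^{(j)}f|_op| ≤ |𝔥^{(j+1)}f|_op pointwise, where 𝔥⁺_i g = ‖(g − T_i g)_+‖_{X_i',∞} and |𝔥⁺g| is the Euclidean norm of (𝔥⁺_1 g,…,𝔥⁺_n g). -/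
/-!
Fix a nonnegative near-maximizer `v` of the multilinear form of `𝔥^{(j)} f (x)`. Moving the
`i`-th coordinate of `x` lowers each entry `𝔥_ι f` by at most `𝔥_{i ι} f (x)`, while `v` stays
admissible at the new point; hence `𝔥⁺_i |𝔥^{(j)} f|_op (x)` is at most the form of
`𝔥^{(j+1)} f (x)` evaluated at `(eᵢ, v)`. Pairing with the normalized vector `𝔥⁺ |𝔥^{(j)} f|_op`
and summing over `i` evaluates that form at a tuple of unit vectors.
-/

noncomputable section

/-- Nested difference `∏_{i ∈ l} (Id - T_i) f`, where `T_i` replaces the `i`-th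
coordinate of `x` by the `i`-th coordinate of `x'`. -/
def nestDiff {n : ℕ} {𝒳 : Type*} :
    List (Fin n) → ((Fin n → 𝒳) → ℝ) → (Fin n → 𝒳) → (Fin n → 𝒳) → ℝ
  | [], f, x, _ => f x
  | i :: l, f, x, x' =>
      nestDiff l f x x' - nestDiff l f (Function.update x i (x' i)) x'

/-- The entry `𝔥_{i₁…i_j} f (x)`: the `L^∞` norm (here: supremum) over the coordinates
in `l` and their replacements of the nested difference. -/
def hEntry {n : ℕ} {𝒳 : Type*} (f : (Fin n → 𝒳) → ℝ) (l : List (Fin n))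
    (x : Fin n → 𝒳) : ℝ :=
  ⨆ z : Fin n → 𝒳, ⨆ z' : Fin n → 𝒳,
    |nestDiff l f (fun i => if i ∈ l then z i else x i) z'|

/-- The `j`-tensor `𝔥^{(j)} f (x)`, supported on tuples of distinct indices. -/
def hTensor {n : ℕ} {𝒳 : Type*} (f : (Fin n → 𝒳) → ℝ) (j : ℕ) (x : Fin n → 𝒳) :
    (Fin j → Fin n) → ℝ :=
  fun ι => if Function.Injective ι then hEntry f (List.ofFn ι) x else 0

/-- The operator norm of a `j`-tensor on `ℝⁿ`. -/
def opNorm {n j : ℕ} (T : (Fin j → Fin n) → ℝ) : ℝ :=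
  ⨆ v : {v : Fin j → Fin n → ℝ // ∀ s, ∑ k, (v s k) ^ 2 ≤ 1},
    ∑ ι : Fin j → Fin n, T ι * ∏ s, v.1 s (ι s)

/-- The one-sided difference operator `𝔥⁺_i g (x) = ‖(g - T_i g)₊‖_{X_i',∞}`. -/
def hPlus {n : ℕ} {𝒳 : Type*} (g : (Fin n → 𝒳) → ℝ) (i : Fin n)
    (x : Fin n → 𝒳) : ℝ :=
  ⨆ y : 𝒳, max (g x - g (Function.update x i y)) 0


section NestedDifferences

variable {n : ℕ} {𝒳 : Type*}

theorem abs_nestDiff_le {f : (Fin n → 𝒳) → ℝ} {M : ℝ} (hf : ∀ x, |f x| ≤ M)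
    (l : List (Fin n)) (x x' : Fin n → 𝒳) : |nestDiff l f x x'| ≤ 2 ^ l.length * M := by
  induction l generalizing x with
  | nil => simpa [nestDiff] using hf x
  | cons i l ih =>
    calc |nestDiff (i :: l) f x x'|
        ≤ |nestDiff l f x x'| + |nestDiff l f (Function.update x i (x' i)) x'| :=
          abs_sub _ _
      _ ≤ 2 ^ l.length * M + 2 ^ l.length * M := add_le_add (ih _) (ih _)
      _ = 2 ^ (i :: l).length * M := by rw [List.length_cons]; ring

theorem nestDiff_congr_right (f : (Fin n → 𝒳) → ℝ) {l : List (Fin n)} {x' y' : Fin n → 𝒳}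
    (h : ∀ i ∈ l, x' i = y' i) (x : Fin n → 𝒳) : nestDiff l f x x' = nestDiff l f x y' := by
  induction l generalizing x with
  | nil => rfl
  | cons i l ih =>
    have h' : ∀ k ∈ l, x' k = y' k := fun k hk => h k (List.mem_cons_of_mem i hk)
    simp only [nestDiff, ih h', h i List.mem_cons_self]

theorem le_hEntry {f : (Fin n → 𝒳) → ℝ} {M : ℝ} (hf : ∀ x, |f x| ≤ M)
    (l : List (Fin n)) (x z z' : Fin n → 𝒳) :
    |nestDiff l f (fun i => if i ∈ l then z i else x i) z'| ≤ hEntry f l x := by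
  have : Nonempty (Fin n → 𝒳) := ⟨x⟩
  have hbound := abs_nestDiff_le hf l
  have hinner : ∀ z : Fin n → 𝒳, BddAbove (Set.range fun z' : Fin n → 𝒳 =>
      |nestDiff l f (fun i => if i ∈ l then z i else x i) z'|) := fun z =>
    ⟨_, Set.forall_mem_range.2 fun z' => hbound _ z'⟩
  have houter : BddAbove (Set.range fun z : Fin n → 𝒳 => ⨆ z' : Fin n → 𝒳,
      |nestDiff l f (fun i => if i ∈ l then z i else x i) z'|) :=
    ⟨_, Set.forall_mem_range.2 fun z => ciSup_le fun z' => hbound _ z'⟩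
  exact (le_ciSup (hinner z) z').trans (le_ciSup houter z)

theorem hEntry_nonneg {f : (Fin n → 𝒳) → ℝ} {M : ℝ} (hf : ∀ x, |f x| ≤ M)
    (l : List (Fin n)) (x : Fin n → 𝒳) : 0 ≤ hEntry f l x :=
  (abs_nonneg _).trans (le_hEntry hf l x x x)

theorem hEntry_update_of_mem (f : (Fin n → 𝒳) → ℝ) {l : List (Fin n)} {i : Fin n}
    (hi : i ∈ l) (x : Fin n → 𝒳) (y : 𝒳) :
    hEntry f l (Function.update x i y) = hEntry f l x := by
  have hpiece : ∀ z : Fin n → 𝒳, (fun k => if k ∈ l then z k else Function.update x i y k) =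
      fun k => if k ∈ l then z k else x k := fun z => funext fun k => by
    by_cases hk : k ∈ l
    · simp [hk]
    · simp [hk, Function.update_of_ne (ne_of_mem_of_not_mem hi hk).symm]
  simp only [hEntry, hpiece]

/-- The difference of the nested differences along `l` at `x` and at `x` with `xᵢ := y` is the
nested difference along `i :: l` with `i`-th coordinate `x i` and replacement `y`. -/
theorem hEntry_le_update_add_cons {f : (Fin n → 𝒳) → ℝ} {M : ℝ} (hf : ∀ x, |f x| ≤ M)
    {l : List (Fin n)} {i : Fin n} (hi : i ∉ l) (x : Fin n → 𝒳) (y : 𝒳) :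
    hEntry f l x ≤ hEntry f l (Function.update x i y) + hEntry f (i :: l) x := by
  have : Nonempty (Fin n → 𝒳) := ⟨x⟩
  refine ciSup_le fun z => ciSup_le fun z' => ?_
  set A := nestDiff l f (fun k => if k ∈ l then z k else x k) z'
  set B := nestDiff l f (fun k => if k ∈ l then z k else Function.update x i y k) z'
  have hcons : nestDiff (i :: l) f
      (fun k => if k ∈ i :: l then Function.update z i (x i) k else x k)
      (Function.update z' i y) = A - B := by
    have hx : (fun k => if k ∈ i :: l then Function.update z i (x i) k else x k) =
        fun k => if k ∈ l then z k else x k := by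
      funext k
      rcases eq_or_ne k i with rfl | hk
      · simp [hi]
      · simp [hk]
    have hxy : Function.update (fun k => if k ∈ l then z k else x k) i y =
        fun k => if k ∈ l then z k else Function.update x i y k := by
      funext k
      rcases eq_or_ne k i with rfl | hk
      · simp [hi]
      · simp [hk]
    have hz' : ∀ k ∈ l, Function.update z' i y k = z' k := fun k hk =>
      Function.update_of_ne (ne_of_mem_of_not_mem hk hi) y z'
    rw [nestDiff, hx, Function.update_self, hxy, nestDiff_congr_right f hz',
      nestDiff_congr_right f hz']
  calc |A| ≤ |B| + |A - B| := by linarith [abs_sub_abs_le_abs_sub A B]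
    _ ≤ hEntry f l (Function.update x i y) + hEntry f (i :: l) x :=
      add_le_add (le_hEntry hf l _ z z') (hcons ▸ le_hEntry hf (i :: l) x _ _)

theorem hTensor_nonneg {f : (Fin n → 𝒳) → ℝ} {M : ℝ} (hf : ∀ x, |f x| ≤ M)
    (j : ℕ) (x : Fin n → 𝒳) (ι : Fin j → Fin n) : 0 ≤ hTensor f j x ι := by
  unfold hTensor
  split_ifs
  exacts [hEntry_nonneg hf _ x, le_rfl]

theorem hTensor_sub_update_le_cons {f : (Fin n → 𝒳) → ℝ} {M : ℝ} (hf : ∀ x, |f x| ≤ M)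
    {j : ℕ} (x : Fin n → 𝒳) (i : Fin n) (y : 𝒳) (ι : Fin j → Fin n) :
    hTensor f j x ι - hTensor f j (Function.update x i y) ι ≤
      hTensor f (j + 1) x (Fin.cons i ι) := by
  by_cases hinj : Function.Injective ι
  · by_cases hmem : i ∈ List.ofFn ι
    · simp only [hTensor, if_pos hinj, hEntry_update_of_mem f hmem, sub_self]
      exact hTensor_nonneg hf _ x _
    · have hcons : Function.Injective (Fin.cons i ι : Fin (j + 1) → Fin n) :=
        Fin.cons_injective_iff.2 ⟨by simpa [List.mem_ofFn] using hmem, hinj⟩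
      have hofFn : List.ofFn (Fin.cons i ι : Fin (j + 1) → Fin n) = i :: List.ofFn ι := by
        simp [List.ofFn_succ]
      simp only [hTensor, if_pos hinj, if_pos hcons, hofFn]
      linarith [hEntry_le_update_add_cons hf hmem x y]
  · have hcons : ¬ Function.Injective (Fin.cons i ι : Fin (j + 1) → Fin n) := by
      rw [Fin.cons_injective_iff]; tauto
    simp [hTensor, hinj, hcons]

end NestedDifferences

section OperatorNorm

variable {n j : ℕ}

theorem opNorm_bddAbove (T : (Fin j → Fin n) → ℝ) :
    BddAbove (Set.range fun v : {v : Fin j → Fin n → ℝ // ∀ s, ∑ k, (v s k) ^ 2 ≤ 1} =>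
      ∑ ι : Fin j → Fin n, T ι * ∏ s, v.1 s (ι s)) := by
  refine ⟨∑ ι, |T ι|, Set.forall_mem_range.2 fun ⟨v, hv⟩ => Finset.sum_le_sum fun ι _ => ?_⟩
  have hentry : ∀ s, |v s (ι s)| ≤ 1 := fun s =>
    (sq_le_one_iff_abs_le_one _).1 <|
      (Finset.single_le_sum (fun k _ => sq_nonneg (v s k)) (Finset.mem_univ (ι s))).trans (hv s)
  calc T ι * ∏ s, v s (ι s) ≤ |T ι| * |∏ s, v s (ι s)| := (le_abs_self _).trans (abs_mul _ _).le
    _ ≤ |T ι| * 1 := by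
      gcongr
      rw [Finset.abs_prod]
      exact Finset.prod_le_one (fun s _ => abs_nonneg _) fun s _ => hentry s
    _ = |T ι| := mul_one _

theorem le_opNorm (T : (Fin j → Fin n) → ℝ) {v : Fin j → Fin n → ℝ}
    (hv : ∀ s, ∑ k, (v s k) ^ 2 ≤ 1) :
    ∑ ι : Fin j → Fin n, T ι * ∏ s, v s (ι s) ≤ opNorm T :=
  le_ciSup (opNorm_bddAbove T) ⟨v, hv⟩

/-- For a nonnegative tensor, taking entrywise absolute values of the vectors can only increase
the form. -/
theorem exists_nonneg_lt_sum_of_lt_opNorm {T : (Fin j → Fin n) → ℝ} (hT : ∀ ι, 0 ≤ T ι)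
    {b : ℝ} (hb : b < opNorm T) :
    ∃ v : Fin j → Fin n → ℝ, (∀ s, ∑ k, (v s k) ^ 2 ≤ 1) ∧ (∀ s k, 0 ≤ v s k) ∧
      b < ∑ ι : Fin j → Fin n, T ι * ∏ s, v s (ι s) := by
  have : Nonempty {v : Fin j → Fin n → ℝ // ∀ s, ∑ k, (v s k) ^ 2 ≤ 1} :=
    ⟨⟨0, fun s => by simp⟩⟩
  obtain ⟨⟨v, hv⟩, hlt⟩ := exists_lt_of_lt_ciSup hb
  refine ⟨fun s k => |v s k|, fun s => by simpa only [sq_abs] using hv s,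
    fun s k => abs_nonneg _, hlt.trans_le (Finset.sum_le_sum fun ι _ => ?_)⟩
  rw [← Finset.abs_prod]
  exact mul_le_mul_of_nonneg_left (le_abs_self _) (hT ι)

theorem sum_mul_sum_cons_le_opNorm (T : (Fin (j + 1) → Fin n) → ℝ) {w : Fin n → ℝ}
    (hw : ∑ k, (w k) ^ 2 ≤ 1) {v : Fin j → Fin n → ℝ} (hv : ∀ s, ∑ k, (v s k) ^ 2 ≤ 1) :
    ∑ i, w i * ∑ ι : Fin j → Fin n, T (Fin.cons i ι) * ∏ s, v s (ι s) ≤ opNorm T := by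
  have hwv : ∀ s, ∑ k, ((Fin.cons w v : Fin (j + 1) → Fin n → ℝ) s k) ^ 2 ≤ 1 :=
    Fin.cases (by simpa using hw) fun s => by simpa using hv s
  refine le_of_eq_of_le ?_ (le_opNorm T hwv)
  simp_rw [Finset.mul_sum, ← Fintype.sum_prod_type']
  refine Fintype.sum_equiv (Fin.consEquiv fun _ => Fin n) _ _ fun p => ?_
  simp [Fin.consEquiv, Fin.prod_univ_succ]
  ring

end OperatorNorm

theorem sqrt_sum_sq_le_of_forall_sum_mul_le {ι : Type*} [Fintype ι] {h : ι → ℝ} {C : ℝ}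
    (h0 : ∀ i, 0 ≤ h i)
    (hC : ∀ w : ι → ℝ, ∑ i, w i ^ 2 ≤ 1 → (∀ i, 0 ≤ w i) → ∑ i, h i * w i ≤ C) :
    √(∑ i, h i ^ 2) ≤ C := by
  set S := √(∑ i, h i ^ 2)
  rcases (Real.sqrt_nonneg _ : 0 ≤ S).eq_or_lt with hS | hS
  · refine hS.symm.le.trans ?_
    simpa using hC 0 (by simp) fun _ => le_rfl
  have hS2 : S ^ 2 = ∑ i, h i ^ 2 := Real.sq_sqrt (Finset.sum_nonneg fun i _ => sq_nonneg _)
  have hw : ∑ i, (h i / S) ^ 2 = 1 := by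
    simp_rw [div_pow, ← Finset.sum_div, ← hS2]
    exact div_self (by positivity)
  calc S = (∑ i, h i ^ 2) / S := by rw [← hS2]; field_simp
    _ = ∑ i, h i * (h i / S) := by rw [Finset.sum_div]; simp_rw [sq, mul_div_assoc]
    _ ≤ C := hC _ hw.le fun i => div_nonneg (h0 i) hS.le

theorem hPlus_nonneg {n : ℕ} {𝒳 : Type*} (g : (Fin n → 𝒳) → ℝ) (i : Fin n)
    (x : Fin n → 𝒳) : 0 ≤ hPlus g i x :=
  Real.iSup_nonneg fun _ => le_max_right _ _

theorem hPlus_opNorm_hTensor_le {n : ℕ} {𝒳 : Type*} {f : (Fin n → 𝒳) → ℝ} {M : ℝ}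
    (hf : ∀ x, |f x| ≤ M) {j : ℕ} {x : Fin n → 𝒳} {v : Fin j → Fin n → ℝ}
    (hv : ∀ s, ∑ k, (v s k) ^ 2 ≤ 1) (hv0 : ∀ s k, 0 ≤ v s k) {δ : ℝ} (hδ : 0 ≤ δ)
    (hvx : opNorm (hTensor f j x) - δ < ∑ ι : Fin j → Fin n, hTensor f j x ι * ∏ s, v s (ι s))
    (i : Fin n) :
    hPlus (fun y => opNorm (hTensor f j y)) i x ≤
      ∑ ι : Fin j → Fin n, hTensor f (j + 1) x (Fin.cons i ι) * ∏ s, v s (ι s) + δ := by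
  have hP0 : 0 ≤ ∑ ι : Fin j → Fin n, hTensor f (j + 1) x (Fin.cons i ι) * ∏ s, v s (ι s) :=
    Finset.sum_nonneg fun ι _ =>
      mul_nonneg (hTensor_nonneg hf _ x _) (Finset.prod_nonneg fun s _ => hv0 s _)
  refine Real.iSup_le (fun y => max_le ?_ (by linarith)) (by linarith)
  have hdiff : ∑ ι : Fin j → Fin n, hTensor f j x ι * ∏ s, v s (ι s) -
      ∑ ι : Fin j → Fin n, hTensor f j (Function.update x i y) ι * ∏ s, v s (ι s) ≤
      ∑ ι : Fin j → Fin n, hTensor f (j + 1) x (Fin.cons i ι) * ∏ s, v s (ι s) := by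
    rw [← Finset.sum_sub_distrib]
    refine Finset.sum_le_sum fun ι _ => ?_
    rw [← sub_mul]
    exact mul_le_mul_of_nonneg_right (hTensor_sub_update_le_cons hf x i y ι)
      (Finset.prod_nonneg fun s _ => hv0 s _)
  linarith [le_opNorm (hTensor f j (Function.update x i y)) hv]

theorem stmt_17_general {n : ℕ} {𝒳 : Type*} (f : (Fin n → 𝒳) → ℝ)
    (M : ℝ) (hf : ∀ x, |f x| ≤ M) (j : ℕ) (x : Fin n → 𝒳) :
    Real.sqrt (∑ i, (hPlus (fun y => opNorm (hTensor f j y)) i x) ^ 2) ≤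
      opNorm (hTensor f (j + 1) x) := by
  refine sqrt_sum_sq_le_of_forall_sum_mul_le (fun i => hPlus_nonneg _ i x) fun w hw hw0 => ?_
  refine le_of_forall_pos_le_add fun ε hε => ?_
  have hW : 0 ≤ ∑ i, w i := Finset.sum_nonneg fun i _ => hw0 i
  set δ := ε / (∑ i, w i + 1)
  have hδ : 0 < δ := by positivity
  obtain ⟨v, hv, hv0, hvx⟩ :=
    exists_nonneg_lt_sum_of_lt_opNorm (hTensor_nonneg hf j x) (sub_lt_self _ hδ)
  calc ∑ i, hPlus (fun y => opNorm (hTensor f j y)) i x * w i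
      ≤ ∑ i, (∑ ι : Fin j → Fin n, hTensor f (j + 1) x (Fin.cons i ι) * ∏ s, v s (ι s) + δ)
          * w i :=
        Finset.sum_le_sum fun i _ => mul_le_mul_of_nonneg_right
          (hPlus_opNorm_hTensor_le hf hv hv0 hδ.le hvx i) (hw0 i)
    _ = ∑ i, w i * ∑ ι : Fin j → Fin n, hTensor f (j + 1) x (Fin.cons i ι) * ∏ s, v s (ι s)
          + δ * ∑ i, w i := by
        rw [Finset.mul_sum, ← Finset.sum_add_distrib]
        exact Finset.sum_congr rfl fun i _ => by ring
    _ ≤ opNorm (hTensor f (j + 1) x) + δ * (∑ i, w i + 1) := by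
        gcongr
        · exact sum_mul_sum_cons_le_opNorm _ hw hv
        · linarith
    _ = opNorm (hTensor f (j + 1) x) + ε := by rw [div_mul_cancel₀ _ (by positivity)]

/-- `|𝔥⁺ |𝔥^{(j)} f|_op | ≤ |𝔥^{(j+1)} f|_op` pointwise. -/
theorem stmt_17 {n : ℕ} {𝒳 : Type*} [Nonempty 𝒳] (f : (Fin n → 𝒳) → ℝ)
    (M : ℝ) (hf : ∀ x, |f x| ≤ M) (j : ℕ) (x : Fin n → 𝒳) :
    Real.sqrt (∑ i, (hPlus (fun y => opNorm (hTensor f j y)) i x) ^ 2) ≤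
      opNorm (hTensor f (j + 1) x) :=
  stmt_17_general f M hf j x

end
end
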